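/- arXiv:math/0211446 — 6 statements merged into one kernel-verified Lean document; each statement's English description precedes it below -/
import Mathlib

section
/- Let V₁ and V₂ be finite-dimensional real inner product spaces and let V = V₁ ⊕ V₂ be their orthogonal direct sum. Let g₁ ⊆ so(V₁) and g₂ ⊆ so(V₂) be Lie subalgebras, and regard g₁ ⊕ g₂ as a Lie subalgebra of so(V) acting block-diagonally. Then K(g₁ ⊕ g₂) is the internal direct sum of K(g₁) and K(g₂): every algebraic curvature tensor R on V with values in g₁ ⊕ g₂ decomposes uniquely as R = R₁ + R₂, where Rᵢ is the extension to V of an algebraic curvature tensor on Vᵢ with values in gᵢ, and conversely every such sum is an algebraic curvature tensor with values in g₁ ⊕ g₂. -/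
/-!
Each value `R X Y` of a curvature tensor with values in `g₁ ⊕ g₂` is skew-adjoint and preserves
both `V₁` and `V₂ = V₁ᗮ`. The Bianchi identity then forces `R x y z = 0` whenever `x, y` lie in
one block and `z` in the other. For `x ∈ V₁`, `y ∈ V₂` this makes `(a, b) ↦ R a y b` symmetric on
`V₁` while `⟪R a y b, c⟫` is skew in `b, c`, so it vanishes; similarly on `V₂`, hence all mixed
terms `R x y` vanish and `R` is the sum of its two block components `R (π₁ ·) (π₁ ·)` and
`R (π₂ ·) (π₂ ·)`. The first kills `V₂`, so its `g₂`-part is zero and it takes values in `g₁`;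
likewise for the second. Uniqueness holds because an extension from `V₂` vanishes on `V₁`.
-/

open scoped RealInnerProductSpace

noncomputable section

attribute [local instance 100] LieRing.ofAssociativeRing

/-- The first Bianchi identity `b₁ R = 0` for an alternating bilinear map
`R : V × V → End V`. -/
def FirstBianchi {V : Type*} [NormedAddCommGroup V] [InnerProductSpace ℝ V]
    (R : V →ₗ[ℝ] V →ₗ[ℝ] Module.End ℝ V) : Prop :=
  ∀ X Y Z : V, R X Y Z + R Y Z X + R Z X Y = 0

/-- `R` is an algebraic curvature tensor with values in the set `g ⊆ End V`:
an alternating bilinear map `V × V → g` satisfying the first Bianchi identity. -/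
def IsAlgCurv {V : Type*} [NormedAddCommGroup V] [InnerProductSpace ℝ V]
    (g : Set (Module.End ℝ V)) (R : V →ₗ[ℝ] V →ₗ[ℝ] Module.End ℝ V) : Prop :=
  (∀ X : V, R X X = 0) ∧ (∀ X Y : V, R X Y ∈ g) ∧ FirstBianchi R

/-- `R` is the extension to `V` of an algebraic curvature tensor on the subspace `V₁`
with values in `g`: it has values in `g` and factors through the orthogonal
projection onto `V₁` in both arguments. -/
def IsExtCurv {V : Type*} [NormedAddCommGroup V] [InnerProductSpace ℝ V]
    [FiniteDimensional ℝ V] (V₁ : Submodule ℝ V) (g : Set (Module.End ℝ V))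
    (R : V →ₗ[ℝ] V →ₗ[ℝ] Module.End ℝ V) : Prop :=
  IsAlgCurv g R ∧
    ∀ X Y : V, R X Y = R ((V₁.orthogonalProjectionOnto X : V)) ((V₁.orthogonalProjectionOnto Y : V))

section

variable {V : Type*} [NormedAddCommGroup V] [InnerProductSpace ℝ V]
  {R : V →ₗ[ℝ] V →ₗ[ℝ] Module.End ℝ V} {U W : Submodule ℝ V}

/-- Alternating three symmetries in the first two slots of `⟪f x z, w⟫` with three
antisymmetries in the last two brings `(x, z, w)` back to itself with an odd sign. -/
theorem eq_zero_of_symm_of_skew (f : V → V → V)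
    (hmem : ∀ x ∈ U, ∀ z ∈ U, f x z ∈ U)
    (hsymm : ∀ x ∈ U, ∀ z ∈ U, f x z = f z x)
    (hskew : ∀ x ∈ U, ∀ z ∈ U, ∀ w ∈ U, ⟪f x z, w⟫ = -⟪z, f x w⟫)
    {x z : V} (hx : x ∈ U) (hz : z ∈ U) : f x z = 0 := by
  set w := f x z
  have hw : w ∈ U := hmem x hx z hz
  have swap₂₃ : ∀ a ∈ U, ∀ b ∈ U, ∀ c ∈ U, ⟪f a b, c⟫ = -⟪f a c, b⟫ := fun a ha b hb c hc => by
    rw [hskew a ha b hb c hc, real_inner_comm]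
  have hww : ⟪w, w⟫ = -⟪w, w⟫ :=
    calc ⟪f x z, w⟫ = ⟪f z x, w⟫ := by rw [hsymm x hx z hz]
      _ = -⟪f z w, x⟫ := swap₂₃ z hz x hx w hw
      _ = -⟪f w z, x⟫ := by rw [hsymm z hz w hw]
      _ = ⟪f w x, z⟫ := by rw [swap₂₃ w hw z hz x hx, neg_neg]
      _ = ⟪f x w, z⟫ := by rw [hsymm w hw x hx]
      _ = -⟪f x z, w⟫ := swap₂₃ x hx w hw z hz
  exact inner_self_eq_zero.mp (self_eq_neg.mp hww)

namespace FirstBianchi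

theorem apply_eq_zero_of_mem (hB : FirstBianchi R) (hUW : Disjoint U W)
    (hU : ∀ X Y : V, ∀ z ∈ U, R X Y z ∈ U) (hW : ∀ X Y : V, ∀ z ∈ W, R X Y z ∈ W)
    {x y z : V} (hx : x ∈ U) (hy : y ∈ U) (hz : z ∈ W) : R x y z = 0 := by
  have h : R x y z = -(R y z x + R z x y) := by
    rw [eq_neg_iff_add_eq_zero, ← add_assoc]
    exact hB x y z
  refine Submodule.disjoint_def.mp hUW _ ?_ (hW x y z hz)
  rw [h]
  exact neg_mem (add_mem (hU y z x hx) (hU z x y hy))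

theorem apply_apply_eq_zero_of_mem (hB : FirstBianchi R) (halt : R.IsAlt)
    (hskew : ∀ X Y x y : V, ⟪R X Y x, y⟫ = -⟪x, R X Y y⟫) (hUW : Disjoint U W)
    (hU : ∀ X Y : V, ∀ z ∈ U, R X Y z ∈ U) (hW : ∀ X Y : V, ∀ z ∈ W, R X Y z ∈ W)
    {x y z : V} (hx : x ∈ U) (hy : y ∈ W) (hz : z ∈ U) : R x y z = 0 := by
  refine eq_zero_of_symm_of_skew (fun a b => R a y b) (fun a _ b hb => hU a y b hb) ?_
    (fun a _ b _ c _ => hskew a y b c) hx hz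
  intro a ha b hb
  have h := hB a y b
  rwa [hB.apply_eq_zero_of_mem hUW hU hW hb ha hy, add_zero, ← halt.neg b y,
    LinearMap.neg_apply, add_neg_eq_zero] at h

theorem apply_eq_zero_of_mem_of_mem (hB : FirstBianchi R) (halt : R.IsAlt)
    (hskew : ∀ X Y x y : V, ⟪R X Y x, y⟫ = -⟪x, R X Y y⟫) (hUW : IsCompl U W)
    (hU : ∀ X Y : V, ∀ z ∈ U, R X Y z ∈ U) (hW : ∀ X Y : V, ∀ z ∈ W, R X Y z ∈ W)
    {x y : V} (hx : x ∈ U) (hy : y ∈ W) : R x y = 0 := by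
  refine LinearMap.ext_on_codisjoint hUW.codisjoint (fun z hz => ?_) (fun z hz => ?_)
  · exact hB.apply_apply_eq_zero_of_mem halt hskew hUW.disjoint hU hW hx hy hz
  · rw [← halt.neg, LinearMap.neg_apply,
      hB.apply_apply_eq_zero_of_mem halt hskew hUW.disjoint.symm hW hU hy hx hz, neg_zero]
    rfl

end FirstBianchi

variable {K : Submodule ℝ V} {gU gW : Submodule ℝ (Module.End ℝ V)} {A : Module.End ℝ V}

/-- `A` is an element of `so(U)` extended by zero on `W`. -/
def IsBlockSkew (U W : Submodule ℝ V) (A : Module.End ℝ V) : Prop :=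
  (∀ x y : V, ⟪A x, y⟫ = -⟪x, A y⟫) ∧ (∀ x ∈ U, A x ∈ U) ∧ (∀ x ∈ W, A x = 0)

theorem inner_apply_eq_neg_of_mem_sup (hgU : ∀ B ∈ gU, IsBlockSkew U W B)
    (hgW : ∀ C ∈ gW, IsBlockSkew W U C) (hA : A ∈ gU ⊔ gW) (x y : V) :
    ⟪A x, y⟫ = -⟪x, A y⟫ := by
  obtain ⟨B, hB, C, hC, rfl⟩ := Submodule.mem_sup.mp hA
  rw [LinearMap.add_apply, LinearMap.add_apply, inner_add_left, inner_add_right,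
    (hgU B hB).1, (hgW C hC).1, neg_add]

theorem apply_mem_of_mem_sup (hgU : ∀ B ∈ gU, IsBlockSkew U W B)
    (hgW : ∀ C ∈ gW, IsBlockSkew W U C) (hA : A ∈ gU ⊔ gW) {x : V} (hx : x ∈ U) :
    A x ∈ U := by
  obtain ⟨B, hB, C, hC, rfl⟩ := Submodule.mem_sup.mp hA
  rw [LinearMap.add_apply, (hgW C hC).2.2 x hx, add_zero]
  exact (hgU B hB).2.1 x hx

theorem mem_left_of_mem_sup (hgU : ∀ B ∈ gU, IsBlockSkew U W B)
    (hgW : ∀ C ∈ gW, IsBlockSkew W U C) (hUW : Codisjoint U W) (hA : A ∈ gU ⊔ gW)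
    (hAW : ∀ z ∈ W, A z = 0) : A ∈ gU := by
  obtain ⟨B, hB, C, hC, rfl⟩ := Submodule.mem_sup.mp hA
  have hC0 : C = 0 := by
    refine LinearMap.ext_on_codisjoint hUW (fun z hz => (hgW C hC).2.2 z hz) (fun z hz => ?_)
    simpa [(hgU B hB).2.2 z hz] using hAW z hz
  rwa [hC0, add_zero]

theorem IsAlgCurv.apply_eq_zero_of_mem_of_mem (hgU : ∀ B ∈ gU, IsBlockSkew U W B)
    (hgW : ∀ C ∈ gW, IsBlockSkew W U C) (hUW : IsCompl U W) (hR : IsAlgCurv ↑(gU ⊔ gW) R)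
    ⦃x y : V⦄ (hx : x ∈ U) (hy : y ∈ W) : R x y = 0 :=
  hR.2.2.apply_eq_zero_of_mem_of_mem hR.1
    (fun X Y => inner_apply_eq_neg_of_mem_sup hgU hgW (hR.2.1 X Y)) hUW
    (fun X Y _ => apply_mem_of_mem_sup hgU hgW (hR.2.1 X Y))
    (fun X Y _ => apply_mem_of_mem_sup hgW hgU (sup_comm gU gW ▸ hR.2.1 X Y)) hx hy

theorem IsAlgCurv.add {g₁ g₂ : Submodule ℝ (Module.End ℝ V)}
    {R₁ R₂ : V →ₗ[ℝ] V →ₗ[ℝ] Module.End ℝ V}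
    (h₁ : IsAlgCurv ↑g₁ R₁) (h₂ : IsAlgCurv ↑g₂ R₂) : IsAlgCurv ↑(g₁ ⊔ g₂) (R₁ + R₂) := by
  refine ⟨fun X => ?_, fun X Y => Submodule.add_mem_sup (h₁.2.1 X Y) (h₂.2.1 X Y),
    fun X Y Z => ?_⟩
  · rw [LinearMap.add_apply, LinearMap.add_apply, h₁.1 X, h₂.1 X, add_zero]
  · simp only [LinearMap.add_apply]
    calc R₁ X Y Z + R₂ X Y Z + (R₁ Y Z X + R₂ Y Z X) + (R₁ Z X Y + R₂ Z X Y)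
        = (R₁ X Y Z + R₁ Y Z X + R₁ Z X Y) + (R₂ X Y Z + R₂ Y Z X + R₂ Z X Y) := by abel
      _ = 0 := by rw [h₁.2.2 X Y Z, h₂.2.2 X Y Z, add_zero]

def blockComponent (K : Submodule ℝ V) [K.HasOrthogonalProjection]
    (R : V →ₗ[ℝ] V →ₗ[ℝ] Module.End ℝ V) : V →ₗ[ℝ] V →ₗ[ℝ] Module.End ℝ V :=
  R.compl₁₂ K.starProjection.toLinearMap K.starProjection.toLinearMap

@[simp]
theorem blockComponent_apply [K.HasOrthogonalProjection] (X Y : V) :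
    blockComponent K R X Y = R (K.starProjection X) (K.starProjection Y) :=
  rfl

theorem blockComponent_add_blockComponent_orthogonal [K.HasOrthogonalProjection]
    (halt : R.IsAlt) (hcross : ∀ x ∈ K, ∀ y ∈ Kᗮ, R x y = 0) :
    blockComponent K R + blockComponent Kᗮ R = R := by
  ext X Y : 2
  have hPQ := hcross _ (K.starProjection_apply_mem X) _ (Kᗮ.starProjection_apply_mem Y)
  have hQP : R (Kᗮ.starProjection X) (K.starProjection Y) = 0 := by
    rw [← halt.neg, hcross _ (K.starProjection_apply_mem Y) _ (Kᗮ.starProjection_apply_mem X),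
      neg_zero]
  conv_rhs => rw [← K.starProjection_add_starProjection_orthogonal X,
    ← K.starProjection_add_starProjection_orthogonal Y]
  simp only [map_add, LinearMap.add_apply, blockComponent_apply, hPQ, hQP]
  abel

end

section

variable {V : Type*} [NormedAddCommGroup V] [InnerProductSpace ℝ V] [FiniteDimensional ℝ V]
  {U W K : Submodule ℝ V} {gU gW : Submodule ℝ (Module.End ℝ V)} {g₁ g₂ : Set (Module.End ℝ V)}
  {R S₁ S₂ : V →ₗ[ℝ] V →ₗ[ℝ] Module.End ℝ V}

theorem isExtCurv_blockComponent (hgU : ∀ A ∈ gU, IsBlockSkew K Kᗮ A)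
    (hgW : ∀ A ∈ gW, IsBlockSkew Kᗮ K A) (hR : IsAlgCurv ↑(gU ⊔ gW) R) :
    IsExtCurv K ↑gU (blockComponent K R) := by
  set P := K.starProjection
  have hP : ∀ X : V, P X ∈ K := K.starProjection_apply_mem
  have hcross := hR.apply_eq_zero_of_mem_of_mem hgU hgW K.isCompl_orthogonal
  have hcross' := (sup_comm gU gW ▸ hR).apply_eq_zero_of_mem_of_mem hgW hgU
    K.isCompl_orthogonal.symm
  have hkill : ∀ X Y : V, ∀ z ∈ Kᗮ, R (P X) (P Y) z = 0 := by
    intro X Y z hz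
    have h := hR.2.2 (P X) (P Y) z
    rwa [hcross (hP Y) hz, hcross' hz (hP X), LinearMap.zero_apply, LinearMap.zero_apply,
      add_zero, add_zero] at h
  have hproj : ∀ X Y Z : V, R (P X) (P Y) Z = R (P X) (P Y) (P Z) := by
    intro X Y Z
    conv_lhs => rw [← K.starProjection_add_starProjection_orthogonal Z]
    rw [map_add, hkill X Y _ (Kᗮ.starProjection_apply_mem Z), add_zero]
  refine ⟨⟨fun X => hR.1 (P X), fun X Y => ?_, fun X Y Z => ?_⟩, fun X Y => ?_⟩
  · exact mem_left_of_mem_sup hgU hgW K.isCompl_orthogonal.codisjoint (hR.2.1 _ _) (hkill X Y)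
  · simp only [blockComponent_apply]
    rw [hproj X Y Z, hproj Y Z X, hproj Z X Y]
    exact hR.2.2 _ _ _
  · simp only [blockComponent_apply, Submodule.coe_orthogonalProjectionOnto_apply]
    rw [Submodule.starProjection_eq_self_iff.mpr (hP X),
      Submodule.starProjection_eq_self_iff.mpr (hP Y)]

theorem IsExtCurv.apply_eq_zero_of_mem_orthogonal (h : IsExtCurv K g₁ S₁) {x : V}
    (hx : x ∈ Kᗮ) : S₁ x = 0 := by
  ext1 y
  rw [h.2, Submodule.coe_orthogonalProjectionOnto_apply, Submodule.coe_orthogonalProjectionOnto_apply,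
    (K.starProjection_apply_eq_zero_iff).mpr hx, map_zero, LinearMap.zero_apply]
  rfl

theorem IsExtCurv.blockComponent_add (h₁ : IsExtCurv U g₁ S₁) (h₂ : IsExtCurv W g₂ S₂)
    (hUW : U ⟂ W) : blockComponent U (S₁ + S₂) = S₁ := by
  ext X Y : 2
  rw [blockComponent_apply, LinearMap.add_apply, LinearMap.add_apply,
    h₂.apply_eq_zero_of_mem_orthogonal (hUW.le (U.starProjection_apply_mem X)),
    LinearMap.zero_apply, add_zero, h₁.2 X Y]
  rfl

end

/-- If `V = V₁ ⊕ V₁ᗮ` is an orthogonal direct sum, `g₁ ⊆ so(V₁)` and `g₂ ⊆ so(V₁ᗮ)` are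
Lie subalgebras (extended by zero to skew-adjoint endomorphisms of `V`), then
`K(g₁ ⊕ g₂)` is the internal direct sum of `K(g₁)` and `K(g₂)`. -/
theorem curv_of_direct_sum_of_algebras
    {V : Type*} [NormedAddCommGroup V] [InnerProductSpace ℝ V] [FiniteDimensional ℝ V]
    (V₁ : Submodule ℝ V)
    (g₁ g₂ : LieSubalgebra ℝ (Module.End ℝ V))
    (hg₁ : ∀ A ∈ g₁, (∀ x y : V, ⟪A x, y⟫ = -⟪x, A y⟫) ∧
      (∀ x ∈ V₁, A x ∈ V₁) ∧ (∀ x ∈ V₁ᗮ, A x = 0))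
    (hg₂ : ∀ A ∈ g₂, (∀ x y : V, ⟪A x, y⟫ = -⟪x, A y⟫) ∧
      (∀ x ∈ V₁ᗮ, A x ∈ V₁ᗮ) ∧ (∀ x ∈ V₁, A x = 0)) :
    (∀ R : V →ₗ[ℝ] V →ₗ[ℝ] Module.End ℝ V,
      IsAlgCurv (↑(g₁.toSubmodule ⊔ g₂.toSubmodule) : Set (Module.End ℝ V)) R →
      ∃! p : (V →ₗ[ℝ] V →ₗ[ℝ] Module.End ℝ V) × (V →ₗ[ℝ] V →ₗ[ℝ] Module.End ℝ V),
        IsExtCurv V₁ (↑g₁ : Set (Module.End ℝ V)) p.1 ∧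
        IsExtCurv V₁ᗮ (↑g₂ : Set (Module.End ℝ V)) p.2 ∧ R = p.1 + p.2) ∧
    (∀ R₁ R₂ : V →ₗ[ℝ] V →ₗ[ℝ] Module.End ℝ V,
      IsExtCurv V₁ (↑g₁ : Set (Module.End ℝ V)) R₁ →
      IsExtCurv V₁ᗮ (↑g₂ : Set (Module.End ℝ V)) R₂ →
      IsAlgCurv (↑(g₁.toSubmodule ⊔ g₂.toSubmodule) : Set (Module.End ℝ V)) (R₁ + R₂)) := by
  have hg₁' : ∀ A ∈ g₁.toSubmodule, IsBlockSkew V₁ᗮᗮ V₁ᗮ A := by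
    rw [V₁.orthogonal_orthogonal]; exact hg₁
  have hg₂' : ∀ A ∈ g₂.toSubmodule, IsBlockSkew V₁ᗮ V₁ᗮᗮ A := by
    rw [V₁.orthogonal_orthogonal]; exact hg₂
  refine ⟨fun R hR => ⟨(blockComponent V₁ R, blockComponent V₁ᗮ R), ⟨?_, ?_, ?_⟩, ?_⟩,
    fun R₁ R₂ h₁ h₂ => h₁.1.add h₂.1⟩
  · exact isExtCurv_blockComponent hg₁ hg₂ hR
  · exact isExtCurv_blockComponent hg₂' hg₁' (sup_comm g₁.toSubmodule _ ▸ hR)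
  · exact (blockComponent_add_blockComponent_orthogonal hR.1
      (fun x hx y hy => hR.apply_eq_zero_of_mem_of_mem hg₁ hg₂ V₁.isCompl_orthogonal hx hy)).symm
  · rintro ⟨S₁, S₂⟩ ⟨h₁, h₂, rfl⟩
    rw [h₁.blockComponent_add h₂ V₁.isOrtho_orthogonal_right, add_comm,
      h₂.blockComponent_add h₁ V₁.isOrtho_orthogonal_left]

end
end

section
/- Let V be a finite-dimensional real inner product space, g ⊆ so(V) a Lie subalgebra, and V = V₁ ⊕ V₂ an orthogonal direct sum decomposition into g-invariant subspaces. If the restriction homomorphisms g → so(V₁), A ↦ A|_{V₁}, and g → so(V₂), A ↦ A|_{V₂}, are both injective, then K(g) = {0}, i.e., the only alternating bilinear map R : V × V → g with b₁R = 0 is R = 0. -/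
/-
Pairing the Bianchi identity with the skew-adjointness of the values gives the pair symmetry
`⟪R a b c, d⟫ = ⟪R c d a, b⟫`. For `x ∈ V₁` and `u ∈ V₁ᗮ` it turns `‖R x u z‖²` with `z ∈ V₁`
into `⟪R z (R x u z) x, u⟫ = 0`, since `g` preserves `V₁`; so `R x u` vanishes on `V₁`, and is zero
by faithfulness on `V₁`. Once the mixed components vanish, the Bianchi identity
`R x y w = -R y w x - R w x y` shows that `R x y` kills the complementary summand whenever `x`, `y`
lie in the same summand, and faithfulness on that summand gives `R x y = 0`.
-/

open scoped RealInnerProductSpace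

noncomputable section

attribute [local instance 100] LieRing.ofAssociativeRing

section Curvature

variable {V : Type*} [NormedAddCommGroup V] [InnerProductSpace ℝ V]
  {R : V →ₗ[ℝ] V →ₗ[ℝ] Module.End ℝ V}

theorem FirstBianchi.inner_pair_symm (hR : FirstBianchi R) (halt : R.IsAlt)
    (hskew : ∀ a b x y : V, ⟪R a b x, y⟫ = -⟪x, R a b y⟫) (a b c d : V) :
    ⟪R a b c, d⟫ = ⟪R c d a, b⟫ := by
  have swap₁₂ : ∀ p q r s : V, ⟪R p q r, s⟫ = -⟪R q p r, s⟫ := fun p q r s => by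
    rw [← halt.neg, LinearMap.neg_apply, inner_neg_left]
  have swap₃₄ : ∀ p q r s : V, ⟪R p q r, s⟫ = -⟪R p q s, r⟫ := fun p q r s => by
    rw [hskew, real_inner_comm]
  have bianchi : ∀ p q r s : V, ⟪R p q r, s⟫ + ⟪R q r p, s⟫ + ⟪R r p q, s⟫ = 0 :=
    fun p q r s => by rw [← inner_add_left, ← inner_add_left, hR p q r, inner_zero_left]
  -- the sum of these four Bianchi identities is `2 ⟪R a b c, d⟫ - 2 ⟪R c d a, b⟫ = 0`
  linarith [bianchi a b c d, bianchi c a d b, bianchi a d b c, bianchi d b c a,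
    swap₃₄ b c a d, swap₃₄ c a b d, swap₃₄ a d c b, swap₃₄ d b a c,
    swap₁₂ b a d c, swap₃₄ a b d c, swap₁₂ c d b a, swap₃₄ d c b a, swap₁₂ d c a b]

theorem FirstBianchi.apply_apply_eq_zero (hR : FirstBianchi R) (halt : R.IsAlt) {x y w : V}
    (hx : R x w = 0) (hy : R y w = 0) : R x y w = 0 := by
  have hwx : R w x = 0 := halt.eq_iff.mp hx
  simpa [hy, hwx] using hR x y w

end Curvature

theorem Submodule.span_union_orthogonal_eq_top {V : Type*} [NormedAddCommGroup V]
    [InnerProductSpace ℝ V] (K : Submodule ℝ V) [K.HasOrthogonalProjection] :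
    Submodule.span ℝ ((K : Set V) ∪ Kᗮ) = ⊤ := by
  rw [Submodule.span_union, Submodule.span_eq, Submodule.span_eq,
    Submodule.sup_orthogonal_of_hasOrthogonalProjection]

theorem curv_eq_zero_of_faithful_restrictions_general
    {V : Type*} [NormedAddCommGroup V] [InnerProductSpace ℝ V] [FiniteDimensional ℝ V]
    (g : LieSubalgebra ℝ (Module.End ℝ V))
    (hskew : ∀ A ∈ g, ∀ x y : V, ⟪A x, y⟫ = -⟪x, A y⟫)
    (V₁ : Submodule ℝ V)
    (hinv₁ : ∀ A ∈ g, ∀ x ∈ V₁, A x ∈ V₁)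
    (hfaith₁ : ∀ A ∈ g, (∀ x ∈ V₁, A x = 0) → A = 0)
    (hfaith₂ : ∀ A ∈ g, (∀ x ∈ V₁ᗮ, A x = 0) → A = 0) :
    ∀ R : V →ₗ[ℝ] V →ₗ[ℝ] Module.End ℝ V,
      IsAlgCurv (↑g : Set (Module.End ℝ V)) R → R = 0 := by
  rintro R ⟨halt, hmem, hR⟩
  have hpair := hR.inner_pair_symm halt fun a b => hskew _ (hmem a b)
  have hmix : ∀ x ∈ V₁, ∀ u ∈ V₁ᗮ, R x u = 0 := fun x hx u hu =>
    hfaith₁ _ (hmem x u) fun z hz => inner_self_eq_zero.mp <| by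
      rw [hpair]
      exact V₁.inner_right_of_mem_orthogonal (hinv₁ _ (hmem z _) x hx) hu
  have hmix' : ∀ u ∈ V₁ᗮ, ∀ x ∈ V₁, R u x = 0 := fun u hu x hx =>
    LinearMap.IsAlt.eq_iff halt |>.mp (hmix x hx u hu)
  refine LinearMap.ext_on V₁.span_union_orthogonal_eq_top fun X hX =>
    LinearMap.ext_on V₁.span_union_orthogonal_eq_top fun Y hY => ?_
  rcases hX with hX | hX <;> rcases hY with hY | hY
  · exact hfaith₂ _ (hmem X Y) fun u hu =>
      hR.apply_apply_eq_zero halt (hmix X hX u hu) (hmix Y hY u hu)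
  · exact hmix X hX Y hY
  · exact hmix' X hX Y hY
  · exact hfaith₁ _ (hmem X Y) fun x hx =>
      hR.apply_apply_eq_zero halt (hmix' X hX x hx) (hmix' Y hY x hx)

/-- If `g ⊆ so(V)` is a Lie subalgebra and `V = V₁ ⊕ V₁ᗮ` is an orthogonal decomposition
into `g`-invariant subspaces such that the restriction of `g` to each summand is
injective, then `K(g) = {0}`. -/
theorem curv_eq_zero_of_faithful_restrictions
    {V : Type*} [NormedAddCommGroup V] [InnerProductSpace ℝ V] [FiniteDimensional ℝ V]
    (g : LieSubalgebra ℝ (Module.End ℝ V))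
    (hskew : ∀ A ∈ g, ∀ x y : V, ⟪A x, y⟫ = -⟪x, A y⟫)
    (V₁ : Submodule ℝ V)
    (hinv₁ : ∀ A ∈ g, ∀ x ∈ V₁, A x ∈ V₁)
    (hinv₂ : ∀ A ∈ g, ∀ x ∈ V₁ᗮ, A x ∈ V₁ᗮ)
    (hfaith₁ : ∀ A ∈ g, (∀ x ∈ V₁, A x = 0) → A = 0)
    (hfaith₂ : ∀ A ∈ g, (∀ x ∈ V₁ᗮ, A x = 0) → A = 0) :
    ∀ R : V →ₗ[ℝ] V →ₗ[ℝ] Module.End ℝ V,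
      IsAlgCurv (↑g : Set (Module.End ℝ V)) R → R = 0 :=
  curv_eq_zero_of_faithful_restrictions_general g hskew V₁ hinv₁ hfaith₁ hfaith₂

end
end

section
/- Let V be a finite-dimensional real inner product space, g ⊆ so(V) a Lie subalgebra, and V = V₁ ⊕ V₂ an orthogonal direct sum decomposition into g-invariant subspaces. Define ĝ₁ := {A ∈ g : A|_{V₂} = 0} and ĝ₂ := {A ∈ g : A|_{V₁} = 0}, and regard ĝ₁|_{V₁} as a Lie subalgebra of so(V₁) and ĝ₂|_{V₂} as a Lie subalgebra of so(V₂). Then K(g) is the internal direct sum of the extensions to V of K(ĝ₁|_{V₁}) and of K(ĝ₂|_{V₂}): every algebraic curvature tensor R on V with values in g decomposes uniquely as R = R₁ + R₂, where Rᵢ is the extension of an algebraic curvature tensor on Vᵢ with values in ĝᵢ|_{Vᵢ}. -/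
open scoped RealInnerProductSpace

noncomputable section

attribute [local instance] LieRing.ofAssociativeRing

/-!
Pair symmetry `⟪R(X,Y)Z, W⟫ = ⟪R(Z,W)X, Y⟫` makes `R(x,u)` vanish for `x ∈ V₁`, `u ∈ V₁ᗮ`,
since `⟪R(x,u)z, w⟫ = ⟪R(z,w)x, u⟫` and `R(z,w) ∈ g` preserves `V₁`. The Bianchi identity then
shows that `R(x,y)` kills `V₁ᗮ` for `x, y ∈ V₁`, and symmetrically. Hence, with `P` and `Q` the
orthogonal projections onto `V₁` and `V₁ᗮ`, `R = R(P·,P·) + R(Q·,Q·)` is a splitting of the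
required kind; it is unique because `P` annihilates every extension from `V₁ᗮ` and `Q` every
extension from `V₁`.
-/

open Submodule

section
variable {V : Type*} [NormedAddCommGroup V] [InnerProductSpace ℝ V]

theorem IsAlgCurv.inner_apply_comm {g : Set (Module.End ℝ V)}
    (hskew : ∀ A ∈ g, ∀ x y : V, ⟪A x, y⟫ = -⟪x, A y⟫)
    {R : V →ₗ[ℝ] V →ₗ[ℝ] Module.End ℝ V} (hR : IsAlgCurv g R) (X Y Z W : V) :
    ⟪R X Y Z, W⟫ = ⟪R Z W X, Y⟫ := by
  obtain ⟨halt, hmem, hb⟩ := hR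
  have h₁ : ∀ X Y Z W : V, ⟪R Y X Z, W⟫ = -⟪R X Y Z, W⟫ := fun X Y Z W => by
    rw [← LinearMap.IsAlt.neg halt X Y]; simp
  have h₂ : ∀ X Y Z W : V, ⟪R X Y W, Z⟫ = -⟪R X Y Z, W⟫ := fun X Y Z W => by
    rw [hskew _ (hmem X Y), real_inner_comm]
  have h₃ : ∀ X Y Z W : V, ⟪R X Y Z, W⟫ + ⟪R Y Z X, W⟫ + ⟪R Z X Y, W⟫ = 0 := fun X Y Z W => by
    rw [← inner_add_left, ← inner_add_left, hb, inner_zero_left]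
  -- the four Bianchi identities for the cyclic shifts of `(X, Y, Z, W)`
  linarith [h₃ X Y Z W, h₃ Y Z W X, h₃ Z W X Y, h₃ W X Y Z, h₁ X Z W Y, h₁ W Y Z X,
    h₂ Y Z W X, h₂ Z W Y X, h₂ W X Z Y, h₂ X Y W Z, h₂ Y W Z X, h₂ Z X W Y]

theorem IsAlgCurv.apply_eq_zero_of_mem_orthogonal {g : Set (Module.End ℝ V)}
    (hskew : ∀ A ∈ g, ∀ x y : V, ⟪A x, y⟫ = -⟪x, A y⟫)
    {R : V →ₗ[ℝ] V →ₗ[ℝ] Module.End ℝ V} (hR : IsAlgCurv g R)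
    {K : Submodule ℝ V} (hK : ∀ A ∈ g, ∀ x ∈ K, A x ∈ K)
    {x u : V} (hx : x ∈ K) (hu : u ∈ Kᗮ) : R x u = 0 := by
  ext z
  have h : ∀ w, ⟪R x u z, w⟫ = 0 := fun w => by
    rw [hR.inner_apply_comm hskew]
    exact inner_right_of_mem_orthogonal (hK _ (hR.2.1 z w) x hx) hu
  exact inner_self_eq_zero.mp (h _)

theorem FirstBianchi.apply_apply_eq_zero_s2 {R : V →ₗ[ℝ] V →ₗ[ℝ] Module.End ℝ V}
    (hb : FirstBianchi R) (halt : R.IsAlt) {K L : Submodule ℝ V}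
    (hmix : ∀ x ∈ K, ∀ u ∈ L, R x u = 0) {x y u : V} (hx : x ∈ K) (hy : y ∈ K) (hu : u ∈ L) :
    R x y u = 0 := by
  have h := hb x y u
  rwa [hmix y hy u hu, ← halt.neg x u, hmix x hx u hu, neg_zero, LinearMap.zero_apply,
    LinearMap.zero_apply, add_zero, add_zero] at h

def compressCurv (K : Submodule ℝ V) [K.HasOrthogonalProjection]
    (R : V →ₗ[ℝ] V →ₗ[ℝ] Module.End ℝ V) : V →ₗ[ℝ] V →ₗ[ℝ] Module.End ℝ V :=
  R.compl₁₂ (K.starProjection : V →ₗ[ℝ] V) (K.starProjection : V →ₗ[ℝ] V)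

section compressCurv

variable (K : Submodule ℝ V) [K.HasOrthogonalProjection]

@[simp]
theorem compressCurv_apply (R : V →ₗ[ℝ] V →ₗ[ℝ] Module.End ℝ V) (X Y : V) :
    compressCurv K R X Y = R (K.starProjection X) (K.starProjection Y) :=
  rfl

theorem compressCurv_add (R S : V →ₗ[ℝ] V →ₗ[ℝ] Module.End ℝ V) :
    compressCurv K (R + S) = compressCurv K R + compressCurv K S :=
  rfl

variable {K}

theorem compressCurv_eq_self {S : V →ₗ[ℝ] V →ₗ[ℝ] Module.End ℝ V}
    (hS : ∀ X Y : V, S X Y = S (K.starProjection X) (K.starProjection Y)) :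
    compressCurv K S = S := by
  ext X Y : 2
  exact (hS X Y).symm

theorem compressCurv_eq_zero {L : Submodule ℝ V} [L.HasOrthogonalProjection] (hLK : L ≤ Kᗮ)
    {S : V →ₗ[ℝ] V →ₗ[ℝ] Module.End ℝ V}
    (hS : ∀ X Y : V, S X Y = S (K.starProjection X) (K.starProjection Y)) :
    compressCurv L S = 0 := by
  ext X Y : 2
  have hP : ∀ X : V, K.starProjection (L.starProjection X) = 0 := fun X =>
    (K.starProjection_apply_eq_zero_iff).mpr (hLK (L.starProjection_apply_mem X))
  simp [hS (L.starProjection X), hP]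

theorem eq_compressCurv_add_compressCurv {R : V →ₗ[ℝ] V →ₗ[ℝ] Module.End ℝ V} (halt : R.IsAlt)
    (hmix : ∀ x ∈ K, ∀ u ∈ Kᗮ, R x u = 0) :
    R = compressCurv K R + compressCurv Kᗮ R := by
  ext X Y : 2
  have hP := K.starProjection_apply_mem
  have hQ := Kᗮ.starProjection_apply_mem
  have hmix' : R (Kᗮ.starProjection X) (K.starProjection Y) = 0 := by
    rw [← halt.neg, hmix _ (hP Y) _ (hQ X), neg_zero]
  conv_lhs => rw [← K.starProjection_add_starProjection_orthogonal X,
    ← K.starProjection_add_starProjection_orthogonal Y]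
  simp only [map_add, LinearMap.add_apply, hmix _ (hP X) _ (hQ Y), hmix', compressCurv_apply,
    add_zero, zero_add]

end compressCurv

theorem IsAlgCurv.isExtCurv_compressCurv [FiniteDimensional ℝ V] {g : Set (Module.End ℝ V)}
    {R : V →ₗ[ℝ] V →ₗ[ℝ] Module.End ℝ V} (hR : IsAlgCurv g R) {K : Submodule ℝ V}
    (hmix : ∀ x ∈ K, ∀ u ∈ Kᗮ, R x u = 0) :
    IsExtCurv K {A | A ∈ g ∧ ∀ u ∈ Kᗮ, A u = 0} (compressCurv K R) := by
  obtain ⟨halt, hmem, hb⟩ := hR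
  have hker : ∀ X Y, ∀ u ∈ Kᗮ, R (K.starProjection X) (K.starProjection Y) u = 0 :=
    fun X Y u hu => hb.apply_apply_eq_zero_s2 halt hmix (K.starProjection_apply_mem X)
      (K.starProjection_apply_mem Y) hu
  have hproj : ∀ X Y Z, compressCurv K R X Y Z =
      R (K.starProjection X) (K.starProjection Y) (K.starProjection Z) := fun X Y Z => by
    conv_lhs => rw [← K.starProjection_add_starProjection_orthogonal Z]
    rw [compressCurv_apply, map_add, hker X Y _ (Kᗮ.starProjection_apply_mem Z), add_zero]
  have hidem : ∀ X, K.starProjection (K.starProjection X) = K.starProjection X := fun X =>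
    starProjection_eq_self_iff.mpr (K.starProjection_apply_mem X)
  refine ⟨⟨fun X => halt _, fun X Y => ⟨hmem _ _, hker X Y⟩, fun X Y Z => ?_⟩, fun X Y => ?_⟩
  · rw [hproj, hproj, hproj]
    exact hb _ _ _
  · simp [hidem]

end

theorem curv_direct_sum_decomposition_general
    {V : Type*} [NormedAddCommGroup V] [InnerProductSpace ℝ V] [FiniteDimensional ℝ V]
    (g : LieSubalgebra ℝ (Module.End ℝ V))
    (hskew : ∀ A ∈ g, ∀ x y : V, ⟪A x, y⟫ = -⟪x, A y⟫)
    (V₁ : Submodule ℝ V)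
    (hinv₁ : ∀ A ∈ g, ∀ x ∈ V₁, A x ∈ V₁) :
    ∀ R : V →ₗ[ℝ] V →ₗ[ℝ] Module.End ℝ V,
      IsAlgCurv (↑g : Set (Module.End ℝ V)) R →
      ∃! p : (V →ₗ[ℝ] V →ₗ[ℝ] Module.End ℝ V) × (V →ₗ[ℝ] V →ₗ[ℝ] Module.End ℝ V),
        IsExtCurv V₁ {A : Module.End ℝ V | A ∈ g ∧ ∀ x ∈ V₁ᗮ, A x = 0} p.1 ∧
        IsExtCurv V₁ᗮ {A : Module.End ℝ V | A ∈ g ∧ ∀ x ∈ V₁, A x = 0} p.2 ∧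
        R = p.1 + p.2 := by
  intro R hR
  have hmix₁ : ∀ x ∈ V₁, ∀ u ∈ V₁ᗮ, R x u = 0 := fun x hx u hu =>
    hR.apply_eq_zero_of_mem_orthogonal hskew hinv₁ hx hu
  have hmix₂ : ∀ u ∈ V₁ᗮ, ∀ x ∈ V₁ᗮᗮ, R u x = 0 := fun u hu x hx => by
    rw [← LinearMap.IsAlt.neg hR.1, hmix₁ x (V₁.orthogonal_orthogonal ▸ hx) u hu, neg_zero]
  refine ⟨(compressCurv V₁ R, compressCurv V₁ᗮ R), ⟨hR.isExtCurv_compressCurv hmix₁, ?_,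
    eq_compressCurv_add_compressCurv hR.1 hmix₁⟩, ?_⟩
  · simpa only [orthogonal_orthogonal, LieSubalgebra.mem_coe] using hR.isExtCurv_compressCurv hmix₂
  · rintro ⟨S₁, S₂⟩ ⟨⟨-, hS₁⟩, ⟨-, hS₂⟩, rfl⟩
    simp only [compressCurv_add, compressCurv_eq_self hS₁, compressCurv_eq_self hS₂,
      compressCurv_eq_zero V₁.le_orthogonal_orthogonal hS₂, compressCurv_eq_zero le_rfl hS₁,
      add_zero, zero_add]

/-- Let `g ⊆ so(V)` be a Lie subalgebra and `V = V₁ ⊕ V₁ᗮ` an orthogonal decomposition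
into `g`-invariant subspaces.  With `ĝ₁ = {A ∈ g : A|_{V₁ᗮ} = 0}` and
`ĝ₂ = {A ∈ g : A|_{V₁} = 0}`, the space `K(g)` is the internal direct sum of the
extensions of `K(ĝ₁)` and `K(ĝ₂)`. -/
theorem curv_direct_sum_decomposition
    {V : Type*} [NormedAddCommGroup V] [InnerProductSpace ℝ V] [FiniteDimensional ℝ V]
    (g : LieSubalgebra ℝ (Module.End ℝ V))
    (hskew : ∀ A ∈ g, ∀ x y : V, ⟪A x, y⟫ = -⟪x, A y⟫)
    (V₁ : Submodule ℝ V)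
    (hinv₁ : ∀ A ∈ g, ∀ x ∈ V₁, A x ∈ V₁)
    (hinv₂ : ∀ A ∈ g, ∀ x ∈ V₁ᗮ, A x ∈ V₁ᗮ) :
    ∀ R : V →ₗ[ℝ] V →ₗ[ℝ] Module.End ℝ V,
      IsAlgCurv (↑g : Set (Module.End ℝ V)) R →
      ∃! p : (V →ₗ[ℝ] V →ₗ[ℝ] Module.End ℝ V) × (V →ₗ[ℝ] V →ₗ[ℝ] Module.End ℝ V),
        IsExtCurv V₁ {A : Module.End ℝ V | A ∈ g ∧ ∀ x ∈ V₁ᗮ, A x = 0} p.1 ∧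
        IsExtCurv V₁ᗮ {A : Module.End ℝ V | A ∈ g ∧ ∀ x ∈ V₁, A x = 0} p.2 ∧
        R = p.1 + p.2 :=
  curv_direct_sum_decomposition_general g hskew V₁ hinv₁

end
end

section
/- Let V be a finite-dimensional real inner product space and g ⊆ so(V) a Lie subalgebra. Suppose there exist an integer k ≥ 2, a real representation W of g, and a g-equivariant linear isomorphism from V onto the direct sum of k copies of W (i.e., V ≅ W^k as g-modules). Then K(g) = {0}: the only alternating bilinear map R : V × V → g with b₁R = 0 is R = 0. -/
open scoped RealInnerProductSpace

noncomputable section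

attribute [local instance 100] LieRing.ofAssociativeRing

/-! Transport `R` through `e` to a `ρ(g)`-valued form `S` on `Fin k → W`. Since every `ρ A` acts
diagonally, the Bianchi identity holds in each component separately. For two vectors in the same
slot `i`, the identity read in another slot `l ≠ i` kills `S`. For slots `i ≠ j`, read in slot `i`
it makes `(a, c) ↦ S (aᵢ, yⱼ) c` symmetric, while each `S (aᵢ, yⱼ)` is skew for the inner product
pulled back from one slot; a trilinear form symmetric in its first two arguments and skew in its
last two vanishes. -/

theorem eq_zero_of_symm₁₂_of_antisymm₂₃ {α G : Type*} [AddGroup G] [IsAddTorsionFree G]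
    {f : α → α → α → G} (hsymm : ∀ a c d, f a c d = f c a d)
    (hanti : ∀ a c d, f a c d = -f a d c) (a c d : α) : f a c d = 0 := by
  refine self_eq_neg.mp ?_
  calc f a c d = -f a d c := hanti a c d
    _ = -f d a c := by rw [hsymm]
    _ = f d c a := by rw [hanti, neg_neg]
    _ = f c d a := hsymm d c a
    _ = -f c a d := hanti c d a
    _ = -f a c d := by rw [hsymm]

section PiFirstBianchi

variable {K ι W : Type*} [Field K] [AddCommGroup W] [Module K W]

def PiFirstBianchi (S : (ι → W) →ₗ[K] (ι → W) →ₗ[K] Module.End K W) : Prop :=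
  ∀ X Y Z i, S X Y (Z i) + S Y Z (X i) + S Z X (Y i) = 0

variable [DecidableEq ι] {S : (ι → W) →ₗ[K] (ι → W) →ₗ[K] Module.End K W}

theorem PiFirstBianchi.apply_single_single_self [Nontrivial ι] (hS : PiFirstBianchi S)
    (i : ι) (x y : W) : S (Pi.single i x) (Pi.single i y) = 0 := by
  obtain ⟨l, hl⟩ := exists_ne i
  ext z
  simpa [hl] using hS (Pi.single i x) (Pi.single i y) (Pi.single l z) l

theorem PiFirstBianchi.apply_single_single_of_ne [CharZero K] (hS : PiFirstBianchi S)
    (halt : S.IsAlt) {B : LinearMap.BilinForm K W} (hB : B.IsSymm) (hBsep : B.SeparatingLeft)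
    (hskew : ∀ X Y, B.IsSkewAdjoint (S X Y)) {i j : ι} (hij : i ≠ j) (x y : W) :
    S (Pi.single i x) (Pi.single j y) = 0 := by
  set T : W → Module.End K W := fun a ↦ S (Pi.single i a) (Pi.single j y)
  have hT_symm : ∀ a c, T a c = T c a := by
    intro a c
    have h := hS (Pi.single i a) (Pi.single j y) (Pi.single i c) i
    rw [← halt.neg (Pi.single i c)] at h
    simpa [T, hij, add_neg_eq_zero] using h
  have hBT : ∀ a c d, B (T a c) d = 0 := by
    refine eq_zero_of_symm₁₂_of_antisymm₂₃ (fun a c d ↦ by rw [hT_symm]) fun a c d ↦ ?_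
    rw [hskew, hB.eq]
    simp [T]
  ext z
  exact hBsep _ (hBT x z)

theorem PiFirstBianchi.eq_zero [Finite ι] [Nontrivial ι] [CharZero K] (hS : PiFirstBianchi S)
    (halt : S.IsAlt) {B : LinearMap.BilinForm K W} (hB : B.IsSymm) (hBsep : B.SeparatingLeft)
    (hskew : ∀ X Y, B.IsSkewAdjoint (S X Y)) : S = 0 :=
  LinearMap.pi_ext fun i x ↦ LinearMap.pi_ext fun j y ↦ by
    rcases eq_or_ne i j with rfl | hij
    · exact hS.apply_single_single_self i x y
    · exact hS.apply_single_single_of_ne halt hB hBsep hskew hij x y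

end PiFirstBianchi

theorem LinearEquiv.apply_symm_single_of_apply_eq {R ι M W : Type*} [Semiring R] [DecidableEq ι]
    [AddCommMonoid M] [Module R M] [AddCommMonoid W] [Module R W] (e : M ≃ₗ[R] (ι → W))
    {A : Module.End R M} {f : Module.End R W} (he : ∀ v i, e (A v) i = f (e v i)) (i : ι)
    (w : W) : A (e.symm (Pi.single i w)) = e.symm (Pi.single i (f w)) :=
  e.eq_symm_apply.mpr <| funext fun j ↦ by
    rw [he, e.apply_symm_apply, Pi.apply_single (fun _ ↦ f) (fun _ ↦ map_zero f)]

section PullbackInner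

variable {V W : Type*} [NormedAddCommGroup V] [InnerProductSpace ℝ V] [AddCommGroup W]
  [Module ℝ W]

theorem isSymm_innerₗ_compl₁₂ (ι : W →ₗ[ℝ] V) :
    LinearMap.BilinForm.IsSymm ((innerₗ V).compl₁₂ ι ι) :=
  ⟨fun w u ↦ real_inner_comm (ι u) (ι w)⟩

theorem separatingLeft_innerₗ_compl₁₂ {ι : W →ₗ[ℝ] V} (hι : Function.Injective ι) :
    ((innerₗ V).compl₁₂ ι ι).SeparatingLeft := fun w hw ↦
  hι <| by simpa using hw w

theorem isSkewAdjoint_innerₗ_compl₁₂ {ι : W →ₗ[ℝ] V} {A : Module.End ℝ V}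
    {f : Module.End ℝ W} (hA : ∀ x y : V, ⟪A x, y⟫ = -⟪x, A y⟫)
    (hAι : ∀ w, A (ι w) = ι (f w)) : ((innerₗ V).compl₁₂ ι ι).IsSkewAdjoint f := fun w u ↦ by
  simp [← hAι, hA]

end PullbackInner

theorem curv_eq_zero_of_isotypic_general
    {V : Type*} [NormedAddCommGroup V] [InnerProductSpace ℝ V]
    (g : LieSubalgebra ℝ (Module.End ℝ V))
    (hskew : ∀ A ∈ g, ∀ x y : V, ⟪A x, y⟫ = -⟪x, A y⟫)
    {k : ℕ} (hk : 2 ≤ k)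
    {W : Type*} [AddCommGroup W] [Module ℝ W]
    (ρ : g →ₗ⁅ℝ⁆ Module.End ℝ W)
    (e : V ≃ₗ[ℝ] (Fin k → W))
    (he : ∀ (A : g) (v : V) (i : Fin k), e ((A : Module.End ℝ V) v) i = ρ A (e v i)) :
    ∀ R : V →ₗ[ℝ] V →ₗ[ℝ] Module.End ℝ V,
      IsAlgCurv (↑g : Set (Module.End ℝ V)) R → R = 0 := by
  rintro R ⟨halt, hg, hbianchi⟩
  have : Nontrivial (Fin k) := Fin.nontrivial_iff_two_le.mpr hk
  let Rg := R.codRestrict₂ g.toSubmodule.subtype Subtype.val_injective (by simpa using hg)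
  have hRg : ∀ X Y, (Rg X Y : Module.End ℝ V) = R X Y :=
    LinearMap.codRestrict₂_apply R g.toSubmodule.subtype _ _
  let S := (Rg.compl₁₂ e.symm.toLinearMap e.symm.toLinearMap).compr₂ ρ.toLinearMap
  have hRS : ∀ X Y Z i, e (R X Y Z) i = S (e X) (e Y) (e Z i) := fun X Y Z i ↦ by
    simpa [S, hRg] using he (Rg X Y) Z i
  let ι₀ := e.symm.toLinearMap ∘ₗ LinearMap.single ℝ (fun _ : Fin k ↦ W) ⟨0, by omega⟩
  have hS : S = 0 := by
    refine PiFirstBianchi.eq_zero (B := (innerₗ V).compl₁₂ ι₀ ι₀) (fun X Y Z i ↦ ?_)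
      (fun X ↦ ?_) (isSymm_innerₗ_compl₁₂ ι₀) (separatingLeft_innerₗ_compl₁₂ ?_) fun X Y ↦ ?_
    · simpa [hRS] using congrFun (congrArg e (hbianchi (e.symm X) (e.symm Y) (e.symm Z))) i
    · have : Rg (e.symm X) (e.symm X) = 0 := Subtype.ext (by simp [hRg, halt])
      simp [S, this]
    · exact fun w u h ↦ by simpa [ι₀] using h
    · exact isSkewAdjoint_innerₗ_compl₁₂ (hskew _ (Rg _ _).2)
        (e.apply_symm_single_of_apply_eq (he _) _)
  ext X Y Z
  refine e.injective (funext fun i ↦ ?_)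
  simp [hRS, hS]

/-- If `g ⊆ so(V)` is a Lie subalgebra and `V` is `g`-equivariantly isomorphic to a
direct sum of `k ≥ 2` copies of a representation `W` of `g`, then `K(g) = {0}`. -/
theorem curv_eq_zero_of_isotypic
    {V : Type*} [NormedAddCommGroup V] [InnerProductSpace ℝ V] [FiniteDimensional ℝ V]
    (g : LieSubalgebra ℝ (Module.End ℝ V))
    (hskew : ∀ A ∈ g, ∀ x y : V, ⟪A x, y⟫ = -⟪x, A y⟫)
    {k : ℕ} (hk : 2 ≤ k)
    {W : Type*} [AddCommGroup W] [Module ℝ W]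
    (ρ : g →ₗ⁅ℝ⁆ Module.End ℝ W)
    (e : V ≃ₗ[ℝ] (Fin k → W))
    (he : ∀ (A : g) (v : V) (i : Fin k), e ((A : Module.End ℝ V) v) i = ρ A (e v i)) :
    ∀ R : V →ₗ[ℝ] V →ₗ[ℝ] Module.End ℝ V,
      IsAlgCurv (↑g : Set (Module.End ℝ V)) R → R = 0 :=
  curv_eq_zero_of_isotypic_general g hskew hk ρ e he

end
end

section
/- Let V be a finite-dimensional real inner product space and let g ⊆ so(V) be a simple Lie subalgebra. Suppose there is a g-invariant subspace V₁ ⊆ V such that g acts nontrivially both on V₁ and on its orthogonal complement V₁^⊥ (i.e., for each of the two subspaces there exist A ∈ g and a vector X in that subspace with AX ≠ 0). Then K(g) = {0}: the only alternating bilinear map R : V × V → g with b₁R = 0 is R = 0. -/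
/-!
The Bianchi identity, read on the `g`-invariant splitting `V = V₁ ⊕ V₁ᗮ`, shows that `R(X, Y)`
annihilates `V₁ᗮ` when `X, Y ∈ V₁`, and annihilates `V₁` when `X, Y ∈ V₁ᗮ`. The operators of `g`
annihilating a `g`-invariant subspace form an ideal; as `g` is simple and acts nontrivially on
both pieces, this ideal is zero, so `R` vanishes on `V₁ × V₁` and on `V₁ᗮ × V₁ᗮ`. Pair symmetry
`⟪R(X, Y) u, w⟫ = ⟪R(u, w) X, Y⟫` then gives `R(X, Y) u = 0` whenever `u` lies in one of the
two pieces, since `R(X, Y) u` lies in the same piece.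
-/

open scoped RealInnerProductSpace

noncomputable section

attribute [local instance 100] LieRing.ofAssociativeRing
attribute [local instance 100] LieAlgebra.ofAssociativeAlgebra

namespace LieModule

variable {K L M : Type*} [CommRing K] [LieRing L] [LieAlgebra K L] [AddCommGroup M] [Module K M]
  [LieRingModule L M] [LieModule K L M]

theorem isFaithful_of_isSimple [LieAlgebra.IsSimple K L] (h : ∃ (x : L) (m : M), ⁅x, m⁆ ≠ 0) :
    IsFaithful K L M := by
  rw [isFaithful_iff_ker_eq_bot]
  refine (LieAlgebra.IsSimple.eq_bot_or_eq_top (LieModule.ker K L M)).resolve_right fun htop => ?_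
  obtain ⟨x, m, hxm⟩ := h
  exact hxm ((LieModule.mem_ker K L M x).mp (htop ▸ LieSubmodule.mem_top x) m)

end LieModule

namespace LieSubalgebra

variable {K M : Type*} [CommRing K] [AddCommGroup M] [Module K M]

theorem eq_zero_of_forall_apply_eq_zero {g : LieSubalgebra K (Module.End K M)}
    [LieAlgebra.IsSimple K g] {W : Submodule K M} (hW : ∀ A ∈ g, ∀ x ∈ W, A x ∈ W)
    (hne : ∃ A ∈ g, ∃ x ∈ W, A x ≠ 0) {A : Module.End K M} (hA : A ∈ g)
    (hAW : ∀ x ∈ W, A x = 0) : A = 0 := by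
  let W' : LieSubmodule K g M := { W with lie_mem := fun {B} {x} hx => hW B B.2 x hx }
  have : LieModule.IsFaithful K g W' := by
    obtain ⟨B, hB, x, hx, hBx⟩ := hne
    exact LieModule.isFaithful_of_isSimple
      ⟨⟨B, hB⟩, ⟨x, hx⟩, fun h => hBx (congrArg Subtype.val h)⟩
  have h0 : (⟨A, hA⟩ : g) = 0 :=
    (LieModule.isFaithful_iff' K g W').mp this _ fun x => Subtype.ext (hAW x x.2)
  exact congrArg Subtype.val h0

end LieSubalgebra

theorem apply_mem_orthogonal_of_skew {V : Type*} [NormedAddCommGroup V] [InnerProductSpace ℝ V]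
    {A : Module.End ℝ V} (hA : ∀ x y : V, ⟪A x, y⟫ = -⟪x, A y⟫) {U : Submodule ℝ V}
    (hU : ∀ x ∈ U, A x ∈ U) {x : V} (hx : x ∈ Uᗮ) : A x ∈ Uᗮ := by
  rw [Submodule.mem_orthogonal]
  intro u hu
  rw [real_inner_comm, hA, Submodule.inner_left_of_mem_orthogonal (hU u hu) hx, neg_zero]

namespace IsAlgCurv

variable {V : Type*} [NormedAddCommGroup V] [InnerProductSpace ℝ V] {g : Set (Module.End ℝ V)}
  {R : V →ₗ[ℝ] V →ₗ[ℝ] Module.End ℝ V}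

theorem apply_swap (hR : IsAlgCurv g R) (X Y : V) : R Y X = -R X Y := by
  have h := hR.1 (X + Y)
  simp only [map_add, LinearMap.add_apply, hR.1 X, hR.1 Y, zero_add, add_zero] at h
  exact eq_neg_of_add_eq_zero_left h

theorem inner_apply_pair_symm (hR : IsAlgCurv g R)
    (hskew : ∀ A ∈ g, ∀ x y : V, ⟪A x, y⟫ = -⟪x, A y⟫) (X Y Z W : V) :
    ⟪R X Y Z, W⟫ = ⟪R Z W X, Y⟫ := by
  have sk : ∀ X Y Z W : V, ⟪R X Y Z, W⟫ = -⟪R X Y W, Z⟫ := fun X Y Z W => by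
    rw [hskew _ (hR.2.1 X Y), real_inner_comm]
  have sw : ∀ X Y Z W : V, ⟪R Y X Z, W⟫ = -⟪R X Y Z, W⟫ := fun X Y Z W => by
    rw [hR.apply_swap X Y, LinearMap.neg_apply, inner_neg_left]
  have b : ∀ X Y Z W : V, ⟪R X Y Z, W⟫ + ⟪R Y Z X, W⟫ + ⟪R Z X Y, W⟫ = 0 := fun X Y Z W => by
    rw [← inner_add_left, ← inner_add_left, hR.2.2 X Y Z, inner_zero_left]
  -- the classical argument: add the Bianchi identities for the four cyclic shifts of `X Y Z W`
  linarith [b X Y Z W, b Y Z W X, b Z W X Y, b W X Y Z, sw X Z Y W, sk Y Z W X, sk Z W Y X,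
    sw Y W Z X, sk Y W Z X, sw X W Z Y, sk X W Z Y, sk X Z W Y, sw X W Y Z, sk X Y W Z]

theorem apply_eq_zero_of_disjoint (hR : IsAlgCurv g R) {U W : Submodule ℝ V}
    (hUW : Disjoint U W) (hU : ∀ A ∈ g, ∀ x ∈ U, A x ∈ U) (hW : ∀ A ∈ g, ∀ x ∈ W, A x ∈ W)
    {X₁ X₂ Y : V} (hX₁ : X₁ ∈ U) (hX₂ : X₂ ∈ U) (hY : Y ∈ W) : R X₁ X₂ Y = 0 := by
  have hb : R X₁ X₂ Y = -(R X₂ Y X₁ + R Y X₁ X₂) := by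
    linear_combination (norm := abel) hR.2.2 X₂ Y X₁
  have hmemU : R X₁ X₂ Y ∈ U := by
    rw [hb]
    exact neg_mem (add_mem (hU _ (hR.2.1 X₂ Y) X₁ hX₁) (hU _ (hR.2.1 Y X₁) X₂ hX₂))
  exact (Submodule.disjoint_def.mp hUW) _ hmemU (hW _ (hR.2.1 X₁ X₂) Y hY)

theorem apply_eq_zero_of_vanishes_on (hR : IsAlgCurv g R)
    (hskew : ∀ A ∈ g, ∀ x y : V, ⟪A x, y⟫ = -⟪x, A y⟫) {U : Submodule ℝ V}
    (hU : ∀ A ∈ g, ∀ x ∈ U, A x ∈ U) (hRU : ∀ u ∈ U, ∀ u' ∈ U, R u u' = 0)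
    (X Y : V) {u : V} (hu : u ∈ U) : R X Y u = 0 := by
  have hmem : R X Y u ∈ U := hU _ (hR.2.1 X Y) u hu
  rw [← inner_self_eq_zero (𝕜 := ℝ), hR.inner_apply_pair_symm hskew, hRU u hu _ hmem,
    LinearMap.zero_apply, inner_zero_left]

end IsAlgCurv

/-- If `g ⊆ so(V)` is a simple Lie subalgebra with an invariant subspace `V₁` such that
`g` acts nontrivially both on `V₁` and on `V₁ᗮ`, then `K(g) = {0}`. -/
theorem curv_eq_zero_of_simple_two_pieces
    {V : Type*} [NormedAddCommGroup V] [InnerProductSpace ℝ V] [FiniteDimensional ℝ V]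
    (g : LieSubalgebra ℝ (Module.End ℝ V))
    (hskew : ∀ A ∈ g, ∀ x y : V, ⟪A x, y⟫ = -⟪x, A y⟫)
    (hsimple : LieAlgebra.IsSimple ℝ g)
    (V₁ : Submodule ℝ V)
    (hinv : ∀ A ∈ g, ∀ x ∈ V₁, A x ∈ V₁)
    (h₁ : ∃ A ∈ g, ∃ x ∈ V₁, A x ≠ 0)
    (h₂ : ∃ A ∈ g, ∃ x ∈ V₁ᗮ, A x ≠ 0) :
    ∀ R : V →ₗ[ℝ] V →ₗ[ℝ] Module.End ℝ V,
      IsAlgCurv (↑g : Set (Module.End ℝ V)) R → R = 0 := by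
  intro R hR
  have hinv' : ∀ A ∈ g, ∀ x ∈ V₁ᗮ, A x ∈ V₁ᗮ := fun A hA _ =>
    apply_mem_orthogonal_of_skew (hskew A hA) (hinv A hA)
  have hR₁ : ∀ X ∈ V₁, ∀ Y ∈ V₁, R X Y = 0 := fun X hX Y hY =>
    LieSubalgebra.eq_zero_of_forall_apply_eq_zero hinv' h₂ (hR.2.1 X Y) fun _ hZ =>
      hR.apply_eq_zero_of_disjoint V₁.orthogonal_disjoint hinv hinv' hX hY hZ
  have hR₂ : ∀ X ∈ V₁ᗮ, ∀ Y ∈ V₁ᗮ, R X Y = 0 := fun X hX Y hY =>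
    LieSubalgebra.eq_zero_of_forall_apply_eq_zero hinv h₁ (hR.2.1 X Y) fun _ hZ =>
      hR.apply_eq_zero_of_disjoint V₁.orthogonal_disjoint.symm hinv' hinv hX hY hZ
  refine LinearMap.ext fun X => LinearMap.ext fun Y => LinearMap.ext fun Z => ?_
  obtain ⟨z₁, hz₁, z₂, hz₂, rfl⟩ := V₁.exists_add_mem_mem_orthogonal Z
  rw [map_add, hR.apply_eq_zero_of_vanishes_on hskew hinv hR₁ X Y hz₁,
    hR.apply_eq_zero_of_vanishes_on hskew hinv' hR₂ X Y hz₂, add_zero]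
  rfl

end
end

section
/- Let V be a finite-dimensional real inner product space and g ⊆ so(V) a Lie subalgebra such that V is irreducible as a g-module. Suppose there exists a nonzero linear map η : V → g that is g-equivariant, i.e., η(AX) = [A, η(X)] for all A ∈ g and X ∈ V. Then g is a simple Lie algebra, η is a g-module isomorphism from V onto g equipped with the adjoint action, and the trilinear form (X,Y,Z) ↦ ⟨η(X)Y, Z⟩ on V is alternating (it is a three-form). -/
/-!
Equivariance turns `η` into a Lie algebra map for the bracket `[X, Y] := η X Y` on `V`:
`η (η X Y) = ⁅η X, η Y⁆`. Its kernel is `g`-invariant, so `η` is injective, and then `η X Y` is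
antisymmetric in `X, Y`. The trace form `(A, B) ↦ tr (A B)` is negative definite on skew operators
and invariant, so an operator `B ∈ g` orthogonal to `η V` satisfies
`tr (η (B x) η y) = tr (B η (η x y)) = 0`, whence `η (B x) = 0`; thus `B ↦ tr (B η ·)` embeds `g`
into `V*` and `η` is onto `g`. An ideal `I` of `g` pulls back to a `g`-invariant subspace of `V`,
which is `0` (then `I` kills `V`) or `V` (then `I = η V = g`).
-/

open scoped RealInnerProductSpace

attribute [local instance 100] LieRing.ofAssociativeRing

noncomputable section

section Equivariant

variable {K V : Type*} [CommRing K] [AddCommGroup V] [Module K V]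
  {g : LieSubalgebra K (Module.End K V)} {η : V →ₗ[K] Module.End K V}

theorem injective_of_equivariant
    (hirr : ∀ U : Submodule K V, (∀ A ∈ g, ∀ x ∈ U, A x ∈ U) → U = ⊥ ∨ U = ⊤)
    (hequiv : ∀ A ∈ g, ∀ x : V, η (A x) = ⁅A, η x⁆) (hnz : η ≠ 0) :
    Function.Injective η := by
  have hker : ∀ A ∈ g, ∀ x ∈ LinearMap.ker η, A x ∈ LinearMap.ker η := by
    intro A hA x hx
    rw [LinearMap.mem_ker] at hx ⊢
    rw [hequiv A hA x, hx, lie_zero]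
  rcases hirr _ hker with h | h
  · exact LinearMap.ker_eq_bot.mp h
  · exact absurd (LinearMap.ker_eq_top.mp h) hnz

theorem equivariant_apply_swap (hinj : Function.Injective η) (hval : ∀ x : V, η x ∈ g)
    (hequiv : ∀ A ∈ g, ∀ x : V, η (A x) = ⁅A, η x⁆) (X Y : V) :
    η X Y = -η Y X :=
  hinj <| by rw [map_neg, hequiv _ (hval X), hequiv _ (hval Y), lie_skew]

theorem lieIdeal_eq_bot_or_eq_top_of_equivariant
    (hirr : ∀ U : Submodule K V, (∀ A ∈ g, ∀ x ∈ U, A x ∈ U) → U = ⊥ ∨ U = ⊤)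
    (hrange : Set.range η = (g : Set (Module.End K V)))
    (hval : ∀ x : V, η x ∈ g) (hequiv : ∀ A ∈ g, ∀ x : V, η (A x) = ⁅A, η x⁆)
    (I : LieIdeal K g) : I = ⊥ ∨ I = ⊤ := by
  let ηg : V →ₗ[K] g := LinearMap.codRestrict g.toSubmodule η hval
  have hηg : ∀ (A : g) (x : V), ηg ((A : Module.End K V) x) = ⁅A, ηg x⁆ := fun A x =>
    Subtype.ext (hequiv A A.2 x)
  rcases hirr (I.toSubmodule.comap ηg) (fun A hA x hx => by
      rw [Submodule.mem_comap, hηg ⟨A, hA⟩]; exact I.lie_mem hx) with h | h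
  · refine Or.inl <| (LieSubmodule.eq_bot_iff I).mpr fun A hA =>
      Subtype.ext <| LinearMap.ext fun x => ?_
    have hAx : (A : Module.End K V) x ∈ I.toSubmodule.comap ηg := by
      rw [Submodule.mem_comap, hηg, ← lie_skew]
      exact neg_mem (I.lie_mem hA)
    rw [h, Submodule.mem_bot] at hAx
    exact hAx
  · refine Or.inr <| eq_top_iff.mpr fun A _ => ?_
    obtain ⟨x, hx⟩ : (A : Module.End K V) ∈ Set.range η := hrange ▸ A.2
    have hxI : ηg x ∈ I := show x ∈ I.toSubmodule.comap ηg from h ▸ Submodule.mem_top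
    rwa [show ηg x = A from Subtype.ext hx] at hxI

theorem not_isLieAbelian_of_equivariant (hinj : Function.Injective η)
    (hval : ∀ x : V, η x ∈ g) (hequiv : ∀ A ∈ g, ∀ x : V, η (A x) = ⁅A, η x⁆) (hnz : η ≠ 0) :
    ¬IsLieAbelian g := by
  intro hab
  refine hnz (LinearMap.ext fun x => LinearMap.ext fun y => hinj ?_)
  have hxy : ⁅(⟨η x, hval x⟩ : g), (⟨η y, hval y⟩ : g)⁆ = 0 := trivial_lie_zero _ _ _ _
  rw [hequiv _ (hval x), LinearMap.zero_apply, LinearMap.zero_apply, map_zero]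
  exact congrArg Subtype.val hxy

end Equivariant

section TraceForm

variable {V : Type*} [NormedAddCommGroup V] [InnerProductSpace ℝ V]

theorem trace_mul_self_eq_neg_sum_norm_sq {P : Module.End ℝ V}
    (hP : ∀ x y : V, ⟪P x, y⟫ = -⟪x, P y⟫) {ι : Type*} [Fintype ι]
    (b : OrthonormalBasis ι ℝ V) :
    LinearMap.trace ℝ V (P * P) = -∑ i, ‖P (b i)‖ ^ 2 := by
  rw [LinearMap.trace_eq_sum_inner _ b, ← Finset.sum_neg_distrib]
  refine Finset.sum_congr rfl fun i _ => ?_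
  rw [Module.End.mul_apply, ← real_inner_self_eq_norm_sq, hP (b i), neg_neg]

variable [FiniteDimensional ℝ V]

theorem eq_zero_of_trace_mul_self_eq_zero {P : Module.End ℝ V}
    (hP : ∀ x y : V, ⟪P x, y⟫ = -⟪x, P y⟫) (h : LinearMap.trace ℝ V (P * P) = 0) : P = 0 := by
  let b := stdOrthonormalBasis ℝ V
  rw [trace_mul_self_eq_neg_sum_norm_sq hP b, neg_eq_zero,
    Finset.sum_eq_zero_iff_of_nonneg fun i _ => sq_nonneg _] at h
  exact b.toBasis.ext fun i => by simpa using h i (Finset.mem_univ i)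

variable {g : LieSubalgebra ℝ (Module.End ℝ V)} {η : V →ₗ[ℝ] Module.End ℝ V}

theorem eq_zero_of_trace_mul_equivariant_eq_zero
    (hskew : ∀ A ∈ g, ∀ x y : V, ⟪A x, y⟫ = -⟪x, A y⟫)
    (hinj : Function.Injective η) (hval : ∀ x : V, η x ∈ g)
    (hequiv : ∀ A ∈ g, ∀ x : V, η (A x) = ⁅A, η x⁆) {B : Module.End ℝ V} (hB : B ∈ g)
    (horth : ∀ x : V, LinearMap.trace ℝ V (B * η x) = 0) : B = 0 := by
  have htrace : ∀ x y : V, LinearMap.trace ℝ V (η (B x) * η y) = 0 := fun x y => by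
    rw [hequiv B hB, LinearMap.trace_lie_mul_eq, ← hequiv _ (hval x), horth]
  ext x
  refine hinj ?_
  rw [LinearMap.zero_apply, map_zero]
  exact eq_zero_of_trace_mul_self_eq_zero (hskew _ (hval _)) (htrace x (B x))

theorem range_eq_of_equivariant (hskew : ∀ A ∈ g, ∀ x y : V, ⟪A x, y⟫ = -⟪x, A y⟫)
    (hinj : Function.Injective η) (hval : ∀ x : V, η x ∈ g)
    (hequiv : ∀ A ∈ g, ∀ x : V, η (A x) = ⁅A, η x⁆) :
    Set.range η = (g : Set (Module.End ℝ V)) := by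
  let pairing : Module.End ℝ V →ₗ[ℝ] Module.Dual ℝ V :=
    ((LinearMap.mul ℝ (Module.End ℝ V)).compr₂ (LinearMap.trace ℝ V)).compl₂ η
  have hpairing : Function.Injective (pairing ∘ₗ Submodule.subtype g.toSubmodule) := by
    rw [← LinearMap.ker_eq_bot, LinearMap.ker_eq_bot']
    exact fun B hB => Subtype.ext <|
      eq_zero_of_trace_mul_equivariant_eq_zero hskew hinj hval hequiv B.2 (LinearMap.ext_iff.mp hB)
  have hle : LinearMap.range η ≤ g.toSubmodule := fun _ ⟨x, hx⟩ => hx ▸ hval x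
  have hfinrank : Module.finrank ℝ g.toSubmodule ≤ Module.finrank ℝ (LinearMap.range η) := by
    rw [LinearMap.finrank_range_of_inj hinj]
    exact (LinearMap.finrank_le_finrank_of_injective hpairing).trans_eq Subspace.dual_finrank_eq
  rw [← LinearMap.coe_range, Submodule.eq_of_le_of_finrank_le hle hfinrank]
  rfl

end TraceForm

theorem simple_of_equivariant_torsion_general
    {V : Type*} [NormedAddCommGroup V] [InnerProductSpace ℝ V] [FiniteDimensional ℝ V]
    (g : LieSubalgebra ℝ (Module.End ℝ V))
    (hskew : ∀ A ∈ g, ∀ x y : V, ⟪A x, y⟫ = -⟪x, A y⟫)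
    (hirr : ∀ U : Submodule ℝ V, (∀ A ∈ g, ∀ x ∈ U, A x ∈ U) → U = ⊥ ∨ U = ⊤)
    (η : V →ₗ[ℝ] Module.End ℝ V)
    (hval : ∀ x : V, η x ∈ g)
    (hnz : η ≠ 0)
    (hequiv : ∀ A ∈ g, ∀ x : V, η (A x) = ⁅A, η x⁆) :
    LieAlgebra.IsSimple ℝ g ∧
    Function.Injective η ∧
    Set.range η = (↑g : Set (Module.End ℝ V)) ∧
    (∀ X Y Z : V, ⟪η X Y, Z⟫ = -⟪η Y X, Z⟫ ∧ ⟪η X Y, Z⟫ = -⟪η X Z, Y⟫) := by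
  have hinj := injective_of_equivariant hirr hequiv hnz
  have hrange := range_eq_of_equivariant hskew hinj hval hequiv
  refine ⟨⟨lieIdeal_eq_bot_or_eq_top_of_equivariant hirr hrange hval hequiv,
    not_isLieAbelian_of_equivariant hinj hval hequiv hnz⟩, hinj, hrange, fun X Y Z => ⟨?_, ?_⟩⟩
  · rw [equivariant_apply_swap hinj hval hequiv X Y, inner_neg_left]
  · rw [hskew _ (hval X), real_inner_comm]

/-- Let `g ⊆ so(V)` act irreducibly on `V` and let `η : V → g` be a nonzero
`g`-equivariant linear map (for the adjoint action on `g`).  Then `g` is simple,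
`η` is a `g`-module isomorphism of `V` onto `g`, and the trilinear form
`(X,Y,Z) ↦ ⟪η(X)Y, Z⟫` is alternating. -/
theorem simple_of_equivariant_torsion
    {V : Type*} [NormedAddCommGroup V] [InnerProductSpace ℝ V] [FiniteDimensional ℝ V]
    (g : LieSubalgebra ℝ (Module.End ℝ V))
    (hskew : ∀ A ∈ g, ∀ x y : V, ⟪A x, y⟫ = -⟪x, A y⟫)
    (hne : (∃ v : V, v ≠ 0))
    (hirr : ∀ U : Submodule ℝ V, (∀ A ∈ g, ∀ x ∈ U, A x ∈ U) → U = ⊥ ∨ U = ⊤)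
    (η : V →ₗ[ℝ] Module.End ℝ V)
    (hval : ∀ x : V, η x ∈ g)
    (hnz : η ≠ 0)
    (hequiv : ∀ A ∈ g, ∀ x : V, η (A x) = ⁅A, η x⁆) :
    LieAlgebra.IsSimple ℝ g ∧
    Function.Injective η ∧
    Set.range η = (↑g : Set (Module.End ℝ V)) ∧
    (∀ X Y Z : V, ⟪η X Y, Z⟫ = -⟪η Y X, Z⟫ ∧ ⟪η X Y, Z⟫ = -⟪η X Z, Y⟫) :=
  simple_of_equivariant_torsion_general g hskew hirr η hval hnz hequiv

end
end
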